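/- Fix an integer n ≥ 1 and signs ε, δ ∈ {+1,−1}, and define ν₀(λ,ξ) = √(q_δ^ε(λ,ξ)/a(λ,ξ)) on the open region Ω = {(λ,ξ) ∈ ℝ² : λ ≠ 0, ξ > (n+1)·|λ|}. Then for every integer j ≥ 0 and every i ∈ {0,1} there exists a constant C > 0 such that |∂_λ^i ∂_ξ^j ν₀(λ,ξ)| ≤ C·|λ|^{−i}·ξ^{−j} for all (λ,ξ) ∈ Ω. -/

import Mathlib

/-- `a(λ,ξ) = √(ξ + λ² + n²/4)`. -/
noncomputable def aFn (n : ℕ) (lam ξ : ℝ) : ℝ :=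
  Real.sqrt (ξ + lam ^ 2 + (n : ℝ) ^ 2 / 4)

/-- `ν₀(λ,ξ) = √(q_δ^ε(λ,ξ)/a(λ,ξ))` where `q_δ^ε = a + ε·n/2 + δ·λ`. -/
noncomputable def nu0 (n : ℕ) (ε δ : ℝ) (lam ξ : ℝ) : ℝ :=
  Real.sqrt ((aFn n lam ξ + ε * ((n : ℝ) / 2) + δ * lam) / aFn n lam ξ)

/-- The mixed partial derivative `∂_λ^i ∂_ξ^j f(λ,ξ)`. -/
noncomputable def mixedPartial (i j : ℕ) (f : ℝ → ℝ → ℝ) (lam ξ : ℝ) : ℝ :=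
  iteratedDeriv i (fun l => iteratedDeriv j (fun t => f l t) ξ) lam

noncomputable def AF (n : ℕ) (l t : ℝ) : ℝ := Real.sqrt (t + (l ^ 2 + (n : ℝ) ^ 2 / 4))
noncomputable def QF (n : ℕ) (ε δ l t : ℝ) : ℝ := AF n l t + (ε * ((n : ℝ) / 2) + δ * l)
noncomputable def rE (j β : ℕ) : ℝ := ((2 * β : ℝ) - (1 + 4 * (j : ℝ))) / 2
noncomputable def sE (β : ℕ) : ℝ := ((1 : ℝ) - 2 * (β : ℝ)) / 2

lemma expandQneg {Q t KA : ℝ} (hQ : 0 < Q) (ht : 0 < t) (hKA : 0 < KA)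
    (hQl : t ≤ KA * Q) (e : ℝ) (he : 0 ≤ e) :
    Q ^ (-e) ≤ KA ^ e * t ^ (-e) := by
  have hdiv : t / KA ≤ Q := (div_le_iff₀ hKA).2 (by linarith [hQl, mul_comm KA Q])
  have h1 : Q ^ (-e) ≤ (t / KA) ^ (-e) :=
    Real.rpow_le_rpow_of_nonpos (by positivity) hdiv (by linarith)
  have h2 : (t / KA) ^ (-e) = KA ^ e * t ^ (-e) := by
    rw [Real.rpow_neg (by positivity), Real.div_rpow ht.le hKA.le, Real.rpow_neg ht.le]
    field_simp
  rwa [h2] at h1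

lemma A2_anti {A t : ℝ} (hA : 0 < A) (ht : 0 < t) (htu : t ≤ A^2) {e : ℝ} (he : e ≤ 0) :
    (A^2) ^ e ≤ t ^ e :=
  Real.rpow_le_rpow_of_nonpos ht htu he

lemma A_collapse {A : ℝ} (hA : 0 < A) (x y z : ℝ) :
    A ^ x * A ^ y * A ^ z = (A^2) ^ ((x + y + z)/2) := by
  rw [← Real.rpow_add hA, ← Real.rpow_add hA, ← Real.rpow_natCast A 2,
    ← Real.rpow_mul hA.le]
  norm_num
  congr 1
  ring

lemma core0 {A Q t K : ℝ} (hA : 0 < A) (hQ : 0 < Q) (ht : 0 < t) (hK : 1 ≤ K)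
    (htu : t ≤ A^2) (hQ2 : Q ≤ 2*A) (hKQ : t ≤ K*A*Q) {j β : ℕ} (hβ : β ≤ j) :
    A ^ rE j β * Q ^ sE β ≤ Real.sqrt 2 * K ^ j * t ^ (-(j:ℝ)) := by
  have hK0 : 0 < K := by linarith
  have e1 : Q ^ sE β = Q ^ (1/2:ℝ) * Q ^ (-(β:ℝ)) := by
    rw [← Real.rpow_add hQ]; congr 1; unfold sE; push_cast; ring
  have e2 : Q ^ (1/2:ℝ) ≤ Real.sqrt 2 * A ^ (1/2:ℝ) := by
    have h := Real.rpow_le_rpow hQ.le hQ2 (by norm_num : (0:ℝ) ≤ 1/2)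
    rwa [Real.mul_rpow (by norm_num) hA.le, ← Real.sqrt_eq_rpow 2] at h
  have e3 : Q ^ (-(β:ℝ)) ≤ (K*A) ^ (β:ℝ) * t ^ (-(β:ℝ)) :=
    expandQneg hQ ht (by positivity) (by linarith [hKQ]) _ (by positivity)
  have eKA : (K*A) ^ (β:ℝ) = K ^ (β:ℝ) * A ^ (β:ℝ) := Real.mul_rpow hK0.le hA.le
  calc A ^ rE j β * Q ^ sE β
      = A ^ rE j β * (Q ^ (1/2:ℝ) * Q ^ (-(β:ℝ))) := by rw [e1]
    _ ≤ A ^ rE j β * ((Real.sqrt 2 * A ^ (1/2:ℝ)) * (K ^ (β:ℝ) * A ^ (β:ℝ) * t ^ (-(β:ℝ)))) := by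
        have h3 : Q ^ (-(β:ℝ)) ≤ K ^ (β:ℝ) * A ^ (β:ℝ) * t ^ (-(β:ℝ)) := by
          rw [← eKA]; exact e3
        have h4 : Q ^ (1/2:ℝ) * Q ^ (-(β:ℝ))
            ≤ (Real.sqrt 2 * A ^ (1/2:ℝ)) * (K ^ (β:ℝ) * A ^ (β:ℝ) * t ^ (-(β:ℝ))) :=
          mul_le_mul e2 h3 (by positivity) (by positivity)
        exact mul_le_mul_of_nonneg_left h4 (by positivity)
    _ = Real.sqrt 2 * K ^ (β:ℝ) *
          ((A ^ rE j β * A ^ (1/2:ℝ) * A ^ (β:ℝ)) * t ^ (-(β:ℝ))) := by ring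
    _ = Real.sqrt 2 * K ^ (β:ℝ) *
          ((A^2) ^ ((β:ℝ) - (j:ℝ)) * t ^ (-(β:ℝ))) := by
        rw [A_collapse hA]
        congr 3
        unfold rE; push_cast; ring
    _ ≤ Real.sqrt 2 * K ^ (β:ℝ) * (t ^ ((β:ℝ) - (j:ℝ)) * t ^ (-(β:ℝ))) := by
        have := A2_anti hA ht htu (e := (β:ℝ) - (j:ℝ))
          (sub_nonpos.2 (by exact_mod_cast hβ))
        have h5 := mul_le_mul_of_nonneg_right this (Real.rpow_nonneg ht.le (-(β:ℝ)))
        exact mul_le_mul_of_nonneg_left h5 (by positivity)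
    _ = Real.sqrt 2 * K ^ (β:ℝ) * t ^ (-(j:ℝ)) := by
        rw [← Real.rpow_add ht]; congr 2; ring
    _ ≤ Real.sqrt 2 * K ^ j * t ^ (-(j:ℝ)) := by
        have h6 : K ^ (β:ℝ) ≤ K ^ j := by
          rw [← Real.rpow_natCast K j]
          exact Real.rpow_le_rpow_of_exponent_le hK (by exact_mod_cast hβ)
        have h7 := mul_le_mul_of_nonneg_left h6 (Real.sqrt_nonneg 2)
        exact mul_le_mul_of_nonneg_right h7 (Real.rpow_nonneg ht.le _)

lemma A_split {A : ℝ} (hA : 0 < A) (e f : ℝ) : (A^2) ^ e * A ^ f = A ^ (2*e + f) := by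
  rw [← Real.rpow_natCast A 2, ← Real.rpow_mul hA.le, ← Real.rpow_add hA]
  norm_num

lemma core1 {A Q t K lam : ℝ} (hA : 0 < A) (hQ : 0 < Q) (ht : 0 < t) (hK : 1 ≤ K)
    (hlam : 0 < |lam|) (hlA : |lam| ≤ A)
    (htu : t ≤ A^2) (hQ2 : Q ≤ 2*A) (hKQ : t ≤ K*A*Q) {j β : ℕ} (hβ : β ≤ j) :
    |lam| * (A ^ (rE j β - 2) * Q ^ sE β)
      ≤ Real.sqrt 2 * K ^ j * (|lam|⁻¹ * t ^ (-(j:ℝ))) := by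
  have hK0 : 0 < K := by linarith
  have e1 : Q ^ sE β = Q ^ (1/2:ℝ) * Q ^ (-(β:ℝ)) := by
    rw [← Real.rpow_add hQ]; congr 1; unfold sE; push_cast; ring
  have e2 : Q ^ (1/2:ℝ) ≤ Real.sqrt 2 * A ^ (1/2:ℝ) := by
    have h := Real.rpow_le_rpow hQ.le hQ2 (by norm_num : (0:ℝ) ≤ 1/2)
    rwa [Real.mul_rpow (by norm_num) hA.le, ← Real.sqrt_eq_rpow 2] at h
  have e3 : Q ^ (-(β:ℝ)) ≤ K ^ (β:ℝ) * A ^ (β:ℝ) * t ^ (-(β:ℝ)) := by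
    rw [← Real.mul_rpow hK0.le hA.le]
    exact expandQneg hQ ht (by positivity) (by linarith) _ (by positivity)
  calc |lam| * (A ^ (rE j β - 2) * Q ^ sE β)
      = |lam| * (A ^ (rE j β - 2) * (Q ^ (1/2:ℝ) * Q ^ (-(β:ℝ)))) := by rw [e1]
    _ ≤ |lam| * (A ^ (rE j β - 2) *
          ((Real.sqrt 2 * A ^ (1/2:ℝ)) * (K ^ (β:ℝ) * A ^ (β:ℝ) * t ^ (-(β:ℝ))))) := by
        have h4 := mul_le_mul e2 e3 (by positivity) (by positivity)
        have h5 := mul_le_mul_of_nonneg_left h4 (Real.rpow_nonneg hA.le (rE j β - 2))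
        exact mul_le_mul_of_nonneg_left (by linarith [h5]) (abs_nonneg lam)
    _ = Real.sqrt 2 * K ^ (β:ℝ) *
          (|lam| * ((A ^ (rE j β - 2) * A ^ (1/2:ℝ) * A ^ (β:ℝ)) * t ^ (-(β:ℝ)))) := by
        ring
    _ = Real.sqrt 2 * K ^ (β:ℝ) *
          ((|lam| * ((A^2) ^ (-1:ℝ))) * ((A^2) ^ ((β:ℝ) - (j:ℝ)) * t ^ (-(β:ℝ)))) := by
        have eAA : A ^ (rE j β - 2) * A ^ (1/2:ℝ) * A ^ (β:ℝ)
            = (A^2) ^ ((β:ℝ) - (j:ℝ) - 1) := by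
          rw [← Real.rpow_natCast A 2, ← Real.rpow_mul hA.le, ← Real.rpow_add hA,
            ← Real.rpow_add hA]
          congr 1; unfold rE; push_cast; ring
        have eSplit : (A^2) ^ ((β:ℝ) - (j:ℝ) - 1)
            = (A^2) ^ (-1:ℝ) * (A^2) ^ ((β:ℝ) - (j:ℝ)) := by
          rw [← Real.rpow_add (by positivity)]; congr 1; ring
        rw [eAA, eSplit]; ring
    _ ≤ Real.sqrt 2 * K ^ (β:ℝ) * (|lam|⁻¹ * (t ^ ((β:ℝ) - (j:ℝ)) * t ^ (-(β:ℝ)))) := by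
        have hi : |lam| * ((A^2) ^ (-1:ℝ)) ≤ |lam|⁻¹ := by
          rw [Real.rpow_neg_one]
          have h1 : |lam| * |lam| ≤ A^2 := by nlinarith
          have h2 : |lam|⁻¹ * (|lam| * |lam|) ≤ |lam|⁻¹ * A^2 :=
            mul_le_mul_of_nonneg_left h1 (by positivity)
          rw [← mul_assoc, inv_mul_cancel₀ hlam.ne', one_mul] at h2
          rw [mul_inv_le_iff₀ (by positivity)]
          linarith [h2]
        have hii : (A^2) ^ ((β:ℝ) - (j:ℝ)) * t ^ (-(β:ℝ))
            ≤ t ^ ((β:ℝ) - (j:ℝ)) * t ^ (-(β:ℝ)) :=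
          mul_le_mul_of_nonneg_right
            (A2_anti hA ht htu (sub_nonpos.2 (by exact_mod_cast hβ)))
            (by positivity)
        have h4 := mul_le_mul hi hii (by positivity) (by positivity)
        exact mul_le_mul_of_nonneg_left h4 (by positivity)
    _ = Real.sqrt 2 * K ^ (β:ℝ) * (|lam|⁻¹ * t ^ (-(j:ℝ))) := by
        rw [← Real.rpow_add ht]; congr 3; ring
    _ ≤ Real.sqrt 2 * K ^ j * (|lam|⁻¹ * t ^ (-(j:ℝ))) := by
        have h6 : K ^ (β:ℝ) ≤ K ^ j := by
          rw [← Real.rpow_natCast K j]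
          exact Real.rpow_le_rpow_of_exponent_le hK (by exact_mod_cast hβ)
        have h7 := mul_le_mul_of_nonneg_left h6 (Real.sqrt_nonneg 2)
        exact mul_le_mul_of_nonneg_right h7 (by positivity)

lemma sEm1 {Q : ℝ} (hQ : 0 < Q) (β : ℕ) : Q ^ (sE β - 1) = Q ^ (-((1/2:ℝ)+(β:ℝ))) := by
  congr 1; unfold sE; push_cast; ring

lemma core23a {A Q t K lam c4 N : ℝ} (hA : 0 < A) (hQ : 0 < Q) (ht : 0 < t) (hK : 1 ≤ K)
    (hlam : 0 < |lam|) (htu : t ≤ A^2) (hKQ : t ≤ K*A*Q)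
    (hN0 : 0 ≤ N) (hc4 : 0 ≤ c4) (hNum : N * A ≤ t + c4)
    (hKey : |lam| * (t + c4) ≤ (3/2) * A^2 * Real.sqrt t) {j β : ℕ} (hβ : β ≤ j) :
    A ^ (rE j β - 1) * N * Q ^ (sE β - 1)
      ≤ (3/2) * K ^ (j+1) * (|lam|⁻¹ * t ^ (-(j:ℝ))) := by
  have hK0 : 0 < K := by linarith
  have e1 : Q ^ (sE β - 1) ≤ (K*A) ^ ((1/2:ℝ)+(β:ℝ)) * t ^ (-((1/2:ℝ)+(β:ℝ))) := by
    rw [sEm1 hQ]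
    exact expandQneg hQ ht (by positivity) (by linarith) _ (by positivity)
  have e2 : N ≤ (t + c4) * A ^ (-1:ℝ) := by
    rw [Real.rpow_neg_one]
    rw [← div_eq_mul_inv, le_div_iff₀ hA]
    exact hNum
  have eK : (K*A) ^ ((1/2:ℝ)+(β:ℝ)) = K ^ ((1/2:ℝ)+(β:ℝ)) * A ^ ((1/2:ℝ)+(β:ℝ)) :=
    Real.mul_rpow hK0.le hA.le
  have eKj : K ^ ((1/2:ℝ)+(β:ℝ)) ≤ K ^ (j+1) := by
    rw [← Real.rpow_natCast K (j+1)]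
    apply Real.rpow_le_rpow_of_exponent_le hK
    push_cast
    have : (β:ℝ) ≤ (j:ℝ) := by exact_mod_cast hβ
    linarith
  calc A ^ (rE j β - 1) * N * Q ^ (sE β - 1)
      ≤ A ^ (rE j β - 1) * ((t + c4) * A ^ (-1:ℝ)) *
          (K ^ ((1/2:ℝ)+(β:ℝ)) * A ^ ((1/2:ℝ)+(β:ℝ)) * t ^ (-((1/2:ℝ)+(β:ℝ)))) := by
        rw [← eK]
        exact mul_le_mul (mul_le_mul_of_nonneg_left e2 (by positivity)) e1
          (by positivity) (by positivity)
    _ = K ^ ((1/2:ℝ)+(β:ℝ)) * ((t + c4) *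
          ((A ^ (rE j β - 1) * A ^ (-1:ℝ) * A ^ ((1/2:ℝ)+(β:ℝ))) *
            t ^ (-((1/2:ℝ)+(β:ℝ))))) := by ring
    _ = K ^ ((1/2:ℝ)+(β:ℝ)) * ((t + c4) *
          (((A^2) ^ (-1:ℝ) * (A^2) ^ ((β:ℝ)-(j:ℝ))) * t ^ (-((1/2:ℝ)+(β:ℝ))))) := by
        congr 3
        rw [← Real.rpow_add (by positivity : (0:ℝ) < A^2), ← Real.rpow_natCast A 2,
          ← Real.rpow_mul hA.le, ← Real.rpow_add hA, ← Real.rpow_add hA]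
        congr 1; unfold rE; push_cast; ring
    _ ≤ K ^ ((1/2:ℝ)+(β:ℝ)) * ((t + c4) *
          (((A^2) ^ (-1:ℝ) * t ^ ((β:ℝ)-(j:ℝ))) * t ^ (-((1/2:ℝ)+(β:ℝ))))) := by
        have h1 : (A^2) ^ ((β:ℝ)-(j:ℝ)) ≤ t ^ ((β:ℝ)-(j:ℝ)) :=
          A2_anti hA ht htu (sub_nonpos.2 (by exact_mod_cast hβ))
        have h2 : (A^2) ^ (-1:ℝ) * (A^2) ^ ((β:ℝ)-(j:ℝ))
            ≤ (A^2) ^ (-1:ℝ) * t ^ ((β:ℝ)-(j:ℝ)) :=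
          mul_le_mul_of_nonneg_left h1 (by positivity)
        have h3 := mul_le_mul_of_nonneg_right h2
          (by positivity : (0:ℝ) ≤ t ^ (-((1/2:ℝ)+(β:ℝ))))
        have h4 := mul_le_mul_of_nonneg_left h3 (by positivity : (0:ℝ) ≤ t + c4)
        exact mul_le_mul_of_nonneg_left h4 (by positivity)
    _ = K ^ ((1/2:ℝ)+(β:ℝ)) * (((t + c4) * ((A^2) ^ (-1:ℝ) * t ^ (-(1/2:ℝ)))) *
          t ^ (-(j:ℝ))) := by
        have : t ^ ((β:ℝ)-(j:ℝ)) * t ^ (-((1/2:ℝ)+(β:ℝ)))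
            = t ^ (-(1/2:ℝ)) * t ^ (-(j:ℝ)) := by
          rw [← Real.rpow_add ht, ← Real.rpow_add ht]; congr 1; ring
        calc K ^ ((1/2:ℝ)+(β:ℝ)) * ((t + c4) *
              (((A^2) ^ (-1:ℝ) * t ^ ((β:ℝ)-(j:ℝ))) * t ^ (-((1/2:ℝ)+(β:ℝ)))))
            = K ^ ((1/2:ℝ)+(β:ℝ)) * ((t + c4) * ((A^2) ^ (-1:ℝ) *
                (t ^ ((β:ℝ)-(j:ℝ)) * t ^ (-((1/2:ℝ)+(β:ℝ)))))) := by ring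
          _ = _ := by rw [this]; ring
    _ ≤ K ^ ((1/2:ℝ)+(β:ℝ)) * (((3/2) * |lam|⁻¹) * t ^ (-(j:ℝ))) := by
        have hkey2 : (t + c4) * ((A^2) ^ (-1:ℝ) * t ^ (-(1/2:ℝ))) ≤ (3/2) * |lam|⁻¹ := by
          have e5 : t ^ (-(1/2:ℝ)) = (Real.sqrt t)⁻¹ := by
            rw [Real.rpow_neg ht.le, Real.sqrt_eq_rpow]
          rw [e5, Real.rpow_neg_one]
          have hst : 0 < Real.sqrt t := Real.sqrt_pos.2 ht
          rw [show (t + c4) * ((A^2)⁻¹ * (Real.sqrt t)⁻¹) = (t + c4)/(A^2 * Real.sqrt t) by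
            field_simp, show (3/2) * |lam|⁻¹ = (3/2)/|lam| by field_simp,
            div_le_div_iff₀ (by positivity) hlam]
          nlinarith [hKey]
        have h5 := mul_le_mul_of_nonneg_right hkey2 (by positivity : (0:ℝ) ≤ t ^ (-(j:ℝ)))
        exact mul_le_mul_of_nonneg_left h5 (by positivity)
    _ ≤ (3/2) * K ^ (j+1) * (|lam|⁻¹ * t ^ (-(j:ℝ))) := by
        have h6 := mul_le_mul_of_nonneg_right eKj
          (by positivity : (0:ℝ) ≤ (3/2) * |lam|⁻¹ * t ^ (-(j:ℝ)))
        calc K ^ ((1/2:ℝ)+(β:ℝ)) * (((3/2) * |lam|⁻¹) * t ^ (-(j:ℝ)))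
            = K ^ ((1/2:ℝ)+(β:ℝ)) * ((3/2) * |lam|⁻¹ * t ^ (-(j:ℝ))) := by ring
          _ ≤ K ^ (j+1) * ((3/2) * |lam|⁻¹ * t ^ (-(j:ℝ))) := h6
          _ = (3/2) * K ^ (j+1) * (|lam|⁻¹ * t ^ (-(j:ℝ))) := by ring

lemma core23b {A Q t lam N : ℝ} (hA : 0 < A) (hQ : 0 < Q) (ht : 0 < t)
    (hlam : 0 < |lam|) (hlA : |lam| ≤ A) (htu : t ≤ A^2) (hAQ : A ≤ Q)
    (hN0 : 0 ≤ N) (hN : N ≤ 2*A) {j β : ℕ} (hβ : β ≤ j) :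
    A ^ (rE j β - 1) * N * Q ^ (sE β - 1) ≤ 2 * (|lam|⁻¹ * t ^ (-(j:ℝ))) := by
  have e1 : Q ^ (sE β - 1) ≤ A ^ (-((1/2:ℝ)+(β:ℝ))) := by
    rw [sEm1 hQ]
    exact Real.rpow_le_rpow_of_nonpos hA hAQ (neg_nonpos.2 (by positivity))
  calc A ^ (rE j β - 1) * N * Q ^ (sE β - 1)
      ≤ A ^ (rE j β - 1) * (2 * A ^ (1:ℝ)) * A ^ (-((1/2:ℝ)+(β:ℝ))) := by
        apply mul_le_mul _ e1 (by positivity) (by positivity)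
        rw [Real.rpow_one]
        exact mul_le_mul_of_nonneg_left hN (by positivity)
    _ = 2 * ((A^2) ^ (-(j:ℝ)) * A ^ (-1:ℝ)) := by
        have hstep : A ^ (rE j β - 1) * (2 * A ^ (1:ℝ)) * A ^ (-((1/2:ℝ)+(β:ℝ)))
            = 2 * (A ^ (rE j β - 1) * A ^ (1:ℝ) * A ^ (-((1/2:ℝ)+(β:ℝ)))) := by ring
        rw [hstep, ← Real.rpow_add hA, ← Real.rpow_add hA, A_split hA]
        congr 2
        unfold rE; push_cast; ring
    _ ≤ 2 * (t ^ (-(j:ℝ)) * |lam|⁻¹) := by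
        have h1 : (A^2) ^ (-(j:ℝ)) ≤ t ^ (-(j:ℝ)) :=
          A2_anti hA ht htu (neg_nonpos.2 (by positivity))
        have h2 : A ^ (-1:ℝ) ≤ |lam|⁻¹ := by
          rw [Real.rpow_neg_one]
          exact inv_anti₀ hlam hlA
        have h4 := mul_le_mul h1 h2 (by positivity) (by positivity)
        exact mul_le_mul_of_nonneg_left h4 (by norm_num)
    _ = 2 * (|lam|⁻¹ * t ^ (-(j:ℝ))) := by ring

lemma core23c {A Q t lam N : ℝ} (hA : 0 < A) (hQ : 0 < Q) (ht : 0 < t)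
    (hlam : 0 < |lam|) (hlA : |lam| ≤ A) (htu : t ≤ A^2)
    (hQlam : |lam| ≤ Q) (hKQ2 : t ≤ 2*A*Q)
    (hN0 : 0 ≤ N) (hN : N ≤ 2*A) {j β : ℕ} (hβ : β ≤ j) :
    A ^ (rE j β - 1) * N * Q ^ (sE β - 1) ≤ 2^(j+1) * (|lam|⁻¹ * t ^ (-(j:ℝ))) := by
  have e0 : Q ^ (sE β - 1) = Q ^ (-(1/2:ℝ)) * Q ^ (-(β:ℝ)) := by
    rw [← Real.rpow_add hQ]; congr 1; unfold sE; push_cast; ring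
  have e1 : Q ^ (-(1/2:ℝ)) ≤ |lam| ^ (-(1/2:ℝ)) :=
    Real.rpow_le_rpow_of_nonpos hlam hQlam (by norm_num)
  have e2 : Q ^ (-(β:ℝ)) ≤ (2*A) ^ (β:ℝ) * t ^ (-(β:ℝ)) :=
    expandQneg hQ ht (by positivity) (by linarith) _ (by positivity)
  have e3 : (2*A) ^ (β:ℝ) = 2 ^ (β:ℝ) * A ^ (β:ℝ) := Real.mul_rpow (by norm_num) hA.le
  calc A ^ (rE j β - 1) * N * Q ^ (sE β - 1)
      ≤ A ^ (rE j β - 1) * (2 * A ^ (1:ℝ)) *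
          (|lam| ^ (-(1/2:ℝ)) * (2 ^ (β:ℝ) * A ^ (β:ℝ) * t ^ (-(β:ℝ)))) := by
        rw [e0]
        apply mul_le_mul
        · rw [Real.rpow_one]; exact mul_le_mul_of_nonneg_left hN (by positivity)
        · rw [← e3]
          exact mul_le_mul e1 e2 (by positivity) (by positivity)
        · positivity
        · positivity
    _ = 2 * 2 ^ (β:ℝ) * (|lam| ^ (-(1/2:ℝ)) *
          ((A ^ (rE j β - 1) * A ^ (1:ℝ) * A ^ (β:ℝ)) * t ^ (-(β:ℝ)))) := by ring
    _ = 2 * 2 ^ (β:ℝ) * (|lam| ^ (-(1/2:ℝ)) *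
          (((A^2) ^ ((β:ℝ)-(j:ℝ)) * A ^ (-(1/2:ℝ))) * t ^ (-(β:ℝ)))) := by
        congr 3
        rw [← Real.rpow_add hA, ← Real.rpow_add hA, A_split hA]
        congr 1; unfold rE; push_cast; ring
    _ ≤ 2 * 2 ^ (β:ℝ) * (|lam| ^ (-(1/2:ℝ)) *
          ((t ^ ((β:ℝ)-(j:ℝ)) * |lam| ^ (-(1/2:ℝ))) * t ^ (-(β:ℝ)))) := by
        have h1 : (A^2) ^ ((β:ℝ)-(j:ℝ)) ≤ t ^ ((β:ℝ)-(j:ℝ)) :=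
          A2_anti hA ht htu (sub_nonpos.2 (by exact_mod_cast hβ))
        have h2 : A ^ (-(1/2:ℝ)) ≤ |lam| ^ (-(1/2:ℝ)) :=
          Real.rpow_le_rpow_of_nonpos hlam hlA (by norm_num)
        have h3 := mul_le_mul h1 h2 (by positivity) (by positivity)
        have h4 := mul_le_mul_of_nonneg_right h3
          (by positivity : (0:ℝ) ≤ t ^ (-(β:ℝ)))
        have h5 := mul_le_mul_of_nonneg_left h4
          (by positivity : (0:ℝ) ≤ |lam| ^ (-(1/2:ℝ)))
        exact mul_le_mul_of_nonneg_left h5 (by positivity)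
    _ = 2 * 2 ^ (β:ℝ) * ((|lam| ^ (-(1/2:ℝ)) * |lam| ^ (-(1/2:ℝ))) *
          (t ^ ((β:ℝ)-(j:ℝ)) * t ^ (-(β:ℝ)))) := by ring
    _ = 2 * 2 ^ (β:ℝ) * (|lam|⁻¹ * t ^ (-(j:ℝ))) := by
        rw [← Real.rpow_add hlam, ← Real.rpow_add ht,
          show (-(1/2:ℝ) + -(1/2:ℝ)) = (-1:ℝ) by ring,
          show ((β:ℝ) - (j:ℝ) + -(β:ℝ)) = -(j:ℝ) by ring, Real.rpow_neg_one]
    _ ≤ 2^(j+1) * (|lam|⁻¹ * t ^ (-(j:ℝ))) := by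
        have h6 : 2 * 2 ^ (β:ℝ) ≤ (2:ℝ)^(j+1) := by
          rw [← Real.rpow_natCast 2 (j+1)]
          rw [show (2:ℝ) * 2 ^ (β:ℝ) = 2 ^ (1 + (β:ℝ)) by
            rw [Real.rpow_add (by norm_num), Real.rpow_one]]
          apply Real.rpow_le_rpow_of_exponent_le (by norm_num)
          push_cast
          have : (β:ℝ) ≤ (j:ℝ) := by exact_mod_cast hβ
          linarith
        exact mul_le_mul_of_nonneg_right h6 (by positivity)

section facts
variable {n : ℕ} {ε δ l t : ℝ}

lemma ht0 (hl : l ≠ 0) (ht : ((n:ℝ)+1)*|l| < t) : 0 < t := by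
  have h1 : 0 < |l| := abs_pos.2 hl
  nlinarith [Nat.cast_nonneg (α := ℝ) n]

lemma hu0 (hl : l ≠ 0) (ht : ((n:ℝ)+1)*|l| < t) : 0 < t + (l ^ 2 + (n : ℝ) ^ 2 / 4) := by
  have h1 := ht0 hl ht
  positivity

lemma hA2 (hl : l ≠ 0) (ht : ((n:ℝ)+1)*|l| < t) :
    AF n l t ^ 2 = t + (l ^ 2 + (n : ℝ) ^ 2 / 4) :=
  Real.sq_sqrt (hu0 hl ht).le

lemma hApos (hl : l ≠ 0) (ht : ((n:ℝ)+1)*|l| < t) : 0 < AF n l t :=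
  Real.sqrt_pos.2 (hu0 hl ht)

lemma hlA (hl : l ≠ 0) (ht : ((n:ℝ)+1)*|l| < t) : |l| < AF n l t := by
  have h1 := hA2 hl ht; have h2 := hApos hl ht; have h3 := ht0 hl ht
  nlinarith [sq_abs l, abs_nonneg l, sq_nonneg ((n:ℝ)/2)]

lemma hnA (hn : 1 ≤ n) (hl : l ≠ 0) (ht : ((n:ℝ)+1)*|l| < t) : (n:ℝ)/2 ≤ AF n l t := by
  have h1 := hA2 hl ht; have h2 := hApos hl ht; have h3 := ht0 hl ht
  nlinarith [sq_nonneg l]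

lemma htA (hl : l ≠ 0) (ht : ((n:ℝ)+1)*|l| < t) : t ≤ AF n l t ^ 2 := by
  have h1 := hA2 hl ht
  nlinarith [sq_nonneg l, sq_nonneg ((n:ℝ)/2)]

lemma hcabs (hε : ε = 1 ∨ ε = -1) (hδ : δ = 1 ∨ δ = -1) :
    |ε * ((n : ℝ)/2) + δ * l| ≤ (n:ℝ)/2 + |l| := by
  have h1 : |ε * ((n : ℝ)/2)| = (n:ℝ)/2 := by
    rcases hε with h | h <;> simp [h, abs_of_nonneg, Nat.cast_nonneg, abs_div]
  have h2 : |δ * l| = |l| := by rcases hδ with h | h <;> simp [h]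
  calc |ε * ((n : ℝ)/2) + δ * l| ≤ |ε * ((n : ℝ)/2)| + |δ * l| := abs_add_le _ _
  _ = (n:ℝ)/2 + |l| := by rw [h1, h2]

lemma hcA (hn : 1 ≤ n) (hε : ε = 1 ∨ ε = -1) (hδ : δ = 1 ∨ δ = -1)
    (hl : l ≠ 0) (ht : ((n:ℝ)+1)*|l| < t) : (n:ℝ)/2 + |l| < AF n l t := by
  have h1 := hA2 hl ht; have h2 := hApos hl ht
  have h4 : 0 < |l| := abs_pos.2 hl
  have h5 : (n:ℝ) * |l| + |l| ≤ ((n:ℝ)+1) * |l| := by ring_nf; rfl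
  nlinarith [sq_abs l]

lemma hQpos (hn : 1 ≤ n) (hε : ε = 1 ∨ ε = -1) (hδ : δ = 1 ∨ δ = -1)
    (hl : l ≠ 0) (ht : ((n:ℝ)+1)*|l| < t) : 0 < QF n ε δ l t := by
  have h1 := hcA hn hε hδ hl ht
  have h2 := hcabs (n := n) (l := l) hε hδ
  have h3 := abs_le.1 h2
  unfold QF; linarith [h3.1]

lemma hQ2A (hn : 1 ≤ n) (hε : ε = 1 ∨ ε = -1) (hδ : δ = 1 ∨ δ = -1)
    (hl : l ≠ 0) (ht : ((n:ℝ)+1)*|l| < t) : QF n ε δ l t ≤ 2 * AF n l t := by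
  have h1 := hcA hn hε hδ hl ht
  have h3 := abs_le.1 (hcabs (n := n) (l := l) hε hδ)
  unfold QF; linarith [h3.2]

lemma hKAQ (hn : 1 ≤ n) (hε : ε = 1 ∨ ε = -1) (hδ : δ = 1 ∨ δ = -1)
    (hl : l ≠ 0) (ht : ((n:ℝ)+1)*|l| < t) :
    t ≤ (3*((n:ℝ)+1)) * AF n l t * QF n ε δ l t := by
  have h1 := hcA hn hε hδ hl ht
  have h2 := abs_le.1 (hcabs (n := n) (l := l) hε hδ)
  have h3 := hA2 hl ht
  have h4 := hApos hl ht
  have h5 : 0 < |l| := abs_pos.2 hl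
  have h6 := hlA hl ht
  have h7 := hnA hn hl ht
  -- QF ≥ AF - (n/2 + |l|) ; (AF - (n/2+|l|))*(AF + n/2 + |l|) = t - n|l| ≥ t/(n+1)
  have hQ : AF n l t - ((n:ℝ)/2 + |l|) ≤ QF n ε δ l t := by unfold QF; linarith [h2.1]
  have hfac : (AF n l t - ((n:ℝ)/2 + |l|)) * (AF n l t + ((n:ℝ)/2 + |l|)) = t - (n:ℝ)*|l| := by
    nlinarith [sq_abs l]
  have hn1 : (0:ℝ) < (n:ℝ) + 1 := by positivity
  have hge : t / ((n:ℝ)+1) ≤ t - (n:ℝ)*|l| := by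
    rw [div_le_iff₀ hn1]
    have : (n:ℝ) ≥ 1 := by exact_mod_cast hn
    nlinarith
  have h3A : AF n l t + ((n:ℝ)/2 + |l|) ≤ 3 * AF n l t := by linarith
  have hQ0 : 0 < AF n l t - ((n:ℝ)/2 + |l|) := by linarith
  have : t / ((n:ℝ)+1) ≤ QF n ε δ l t * (3 * AF n l t) := by
    calc t / ((n:ℝ)+1) ≤ t - (n:ℝ)*|l| := hge
    _ = (AF n l t - ((n:ℝ)/2 + |l|)) * (AF n l t + ((n:ℝ)/2 + |l|)) := hfac.symm
    _ ≤ QF n ε δ l t * (3 * AF n l t) := by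
        apply mul_le_mul hQ h3A (by linarith) (hQpos hn hε hδ hl ht).le
  rw [div_le_iff₀ hn1] at this
  nlinarith
end facts


noncomputable def coef : ℕ → ℕ → ℝ
  | 0, β => if β = 0 then 1 else 0
  | (j+1), 0 => coef j 0 * (rE j 0 / 2)
  | (j+1), (β+1) => coef j (β+1) * (rE j (β+1) / 2) + coef j β * (sE β / 2)

lemma coef_eq_zero : ∀ j β : ℕ, j < β → coef j β = 0 := by
  intro j
  induction j with
  | zero => intro β hβ; simp only [coef, if_neg (by omega : ¬ β = 0)]
  | succ j ih =>
    intro β hβ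
    match β, hβ with
    | β+1, hβ =>
      have h1 : j < β + 1 := by omega
      have h2 : j < β := by omega
      simp [coef, ih _ h1, ih _ h2]

lemma rE_shift1 (j β : ℕ) : rE j β - 2 = rE (j+1) β := by unfold rE; push_cast; ring
lemma rE_shift2 (j β : ℕ) : rE j β - 1 = rE (j+1) (β+1) := by unfold rE; push_cast; ring
lemma sE_shift (β : ℕ) : sE β - 1 = sE (β+1) := by unfold sE; push_cast; ring

section deriv
variable {n : ℕ} {ε δ l t : ℝ}

lemma hasDerivAt_AF_t (hl : l ≠ 0) (ht : ((n:ℝ)+1)*|l| < t) :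
    HasDerivAt (fun s => AF n l s) (1/(2 * AF n l t)) t := by
  have hu : 0 < t + (l ^ 2 + (n : ℝ) ^ 2 / 4) := by
    have h1 : 0 < |l| := abs_pos.2 hl
    have : 0 < t := by nlinarith [Nat.cast_nonneg (α := ℝ) n]
    positivity
  have hinner : HasDerivAt (fun s : ℝ => s + (l ^ 2 + (n : ℝ) ^ 2 / 4)) 1 t :=
    (hasDerivAt_id t).add_const _
  have := (Real.hasDerivAt_sqrt hu.ne').comp t hinner
  simpa [AF, Function.comp_def] using this

lemma hasDerivAt_AF_rpow_t (hl : l ≠ 0) (ht : ((n:ℝ)+1)*|l| < t) (p : ℝ) :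
    HasDerivAt (fun s => AF n l s ^ p) (p/2 * AF n l t ^ (p - 2)) t := by
  have hA : 0 < AF n l t := Real.sqrt_pos.2 (by
    have h1 : 0 < |l| := abs_pos.2 hl
    have : 0 < t := by nlinarith [Nat.cast_nonneg (α := ℝ) n]
    positivity)
  have h := (Real.hasDerivAt_rpow_const (p := p) (Or.inl hA.ne')).comp t
    (hasDerivAt_AF_t hl ht)
  refine h.congr_deriv ?_
  rw [show p - 2 = (p - 1) + (-1 : ℝ) by ring, Real.rpow_add hA, Real.rpow_neg_one]
  ring

lemma hasDerivAt_QF_rpow_t (hn : 1 ≤ n) (hε : ε = 1 ∨ ε = -1) (hδ : δ = 1 ∨ δ = -1)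
    (hl : l ≠ 0) (ht : ((n:ℝ)+1)*|l| < t) (p : ℝ) :
    HasDerivAt (fun s => QF n ε δ l s ^ p)
      (p/2 * QF n ε δ l t ^ (p - 1) * (AF n l t)⁻¹) t := by
  have hQ : 0 < QF n ε δ l t := hQpos hn hε hδ hl ht
  have hA : 0 < AF n l t := hApos hl ht
  have hQd : HasDerivAt (fun s => QF n ε δ l s) (1/(2 * AF n l t)) t :=
    (hasDerivAt_AF_t hl ht).add_const _
  have h := (Real.hasDerivAt_rpow_const (p := p) (Or.inl hQ.ne')).comp t hQd
  refine h.congr_deriv ?_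
  field_simp

lemma hasDerivAt_term_t (hn : 1 ≤ n) (hε : ε = 1 ∨ ε = -1) (hδ : δ = 1 ∨ δ = -1)
    (hl : l ≠ 0) (ht : ((n:ℝ)+1)*|l| < t) (r s : ℝ) :
    HasDerivAt (fun u => AF n l u ^ r * QF n ε δ l u ^ s)
      (r/2 * (AF n l t ^ (r-2) * QF n ε δ l t ^ s)
        + s/2 * (AF n l t ^ (r-1) * QF n ε δ l t ^ (s-1))) t := by
  have hA : 0 < AF n l t := hApos hl ht
  have h := (hasDerivAt_AF_rpow_t hl ht r).mul (hasDerivAt_QF_rpow_t hn hε hδ hl ht s)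
  refine h.congr_deriv ?_
  rw [show r - 1 = r + (-1 : ℝ) by ring, Real.rpow_add hA, Real.rpow_neg_one]
  ring
end deriv


lemma AF_eq (n : ℕ) (l t : ℝ) : AF n l t = aFn n l t := by
  unfold AF aFn; ring_nf

lemma nu0_eq {n : ℕ} {ε δ l t : ℝ} (hn : 1 ≤ n) (hε : ε = 1 ∨ ε = -1)
    (hδ : δ = 1 ∨ δ = -1) (hl : l ≠ 0) (ht : ((n:ℝ)+1)*|l| < t) :
    nu0 n ε δ l t = AF n l t ^ (rE 0 0) * QF n ε δ l t ^ (sE 0) := by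
  have hA : 0 < AF n l t := hApos hl ht
  have hQ : 0 < QF n ε δ l t := hQpos hn hε hδ hl ht
  have h1 : nu0 n ε δ l t = Real.sqrt (QF n ε δ l t / AF n l t) := by
    unfold nu0 QF
    rw [AF_eq]
    ring_nf
  rw [h1, Real.sqrt_div hQ.le, Real.sqrt_eq_rpow, Real.sqrt_eq_rpow]
  rw [div_eq_mul_inv, ← Real.rpow_neg hA.le]
  have hr : rE 0 0 = -(1/2 : ℝ) := by norm_num [rE]
  have hs : sE 0 = (1/2 : ℝ) := by norm_num [sE]
  rw [hr, hs]; ring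

lemma formula {n : ℕ} {ε δ : ℝ} (hn : 1 ≤ n) (hε : ε = 1 ∨ ε = -1)
    (hδ : δ = 1 ∨ δ = -1) (j : ℕ) :
    ∀ l t : ℝ, l ≠ 0 → ((n:ℝ)+1)*|l| < t →
      iteratedDeriv j (fun s => nu0 n ε δ l s) t
        = ∑ β ∈ Finset.range (j+1),
            coef j β * (AF n l t ^ rE j β * QF n ε δ l t ^ sE β) := by
  induction j with
  | zero =>
    intro l t hl ht
    rw [iteratedDeriv_zero, Finset.sum_range_one]
    rw [nu0_eq hn hε hδ hl ht]
    simp [coef]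
  | succ j ih =>
    intro l t hl ht
    rw [iteratedDeriv_succ]
    have hev : (iteratedDeriv j (fun s => nu0 n ε δ l s))
        =ᶠ[nhds t] (fun s => ∑ β ∈ Finset.range (j+1),
            coef j β * (AF n l s ^ rE j β * QF n ε δ l s ^ sE β)) := by
      filter_upwards [Ioi_mem_nhds ht] with s hs using ih l s hl hs
    rw [hev.deriv_eq]
    have hD : HasDerivAt (fun s => ∑ β ∈ Finset.range (j+1),
        coef j β * (AF n l s ^ rE j β * QF n ε δ l s ^ sE β))
        (∑ β ∈ Finset.range (j+1), coef j β *
          (rE j β/2 * (AF n l t ^ (rE j β - 2) * QF n ε δ l t ^ sE β)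
            + sE β/2 * (AF n l t ^ (rE j β - 1) * QF n ε δ l t ^ (sE β - 1)))) t := by
      apply HasDerivAt.fun_sum
      intro β _
      exact (hasDerivAt_term_t hn hε hδ hl ht (rE j β) (sE β)).const_mul _
    rw [hD.deriv]
    -- now pure algebra
    have hsplit : ∀ β ∈ Finset.range (j+1),
        coef j β * (rE j β/2 * (AF n l t ^ (rE j β - 2) * QF n ε δ l t ^ sE β)
          + sE β/2 * (AF n l t ^ (rE j β - 1) * QF n ε δ l t ^ (sE β - 1)))
        = coef j β * (rE j β/2) * (AF n l t ^ rE (j+1) β * QF n ε δ l t ^ sE β)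
          + coef j β * (sE β/2) *
              (AF n l t ^ rE (j+1) (β+1) * QF n ε δ l t ^ sE (β+1)) := by
      intro β _
      rw [← rE_shift1, ← rE_shift2, ← sE_shift]; ring
    rw [Finset.sum_congr rfl hsplit, Finset.sum_add_distrib]
    -- RHS decomposition
    have hcoef : ∀ β, coef (j+1) β = coef j β * (rE j β / 2)
        + (if β = 0 then 0 else coef j (β-1) * (sE (β-1) / 2)) := by
      intro β
      match β with
      | 0 => simp [coef]
      | β+1 => simp [coef]
    have hRHS : ∑ β ∈ Finset.range (j+2),
        coef (j+1) β * (AF n l t ^ rE (j+1) β * QF n ε δ l t ^ sE β)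
        = (∑ β ∈ Finset.range (j+2), coef j β * (rE j β / 2) *
            (AF n l t ^ rE (j+1) β * QF n ε δ l t ^ sE β))
          + ∑ β ∈ Finset.range (j+2),
              (if β = 0 then 0 else coef j (β-1) * (sE (β-1) / 2)) *
                (AF n l t ^ rE (j+1) β * QF n ε δ l t ^ sE β) := by
      rw [← Finset.sum_add_distrib]
      apply Finset.sum_congr rfl
      intro β _
      rw [hcoef β]; ring
    rw [hRHS]
    congr 1
    · -- first sums
      conv_rhs => rw [Finset.sum_range_succ]
      rw [coef_eq_zero j (j+1) (by omega)]
      simp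
    · -- second sums
      conv_rhs => rw [Finset.sum_range_succ']
      simp only [Nat.succ_ne_zero, if_false, Nat.succ_sub_one, if_pos rfl, zero_mul,
        add_zero, reduceIte]

section lamderiv
variable {n : ℕ} {ε δ l t : ℝ}

lemma hasDerivAt_AF_l (hn : 1 ≤ n) (hl : l ≠ 0) (ht : ((n:ℝ)+1)*|l| < t) :
    HasDerivAt (fun m => AF n m t) (l / AF n l t) l := by
  have hu : 0 < t + (l ^ 2 + (n : ℝ) ^ 2 / 4) := hu0 hl ht
  have h1 : HasDerivAt (fun m : ℝ => m ^ 2) (2 * l) l := by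
    simpa using hasDerivAt_pow 2 l
  have h2 : HasDerivAt (fun m : ℝ => t + (m ^ 2 + (n:ℝ)^2/4)) (2 * l) l :=
    (h1.add_const ((n:ℝ)^2/4)).const_add t
  have h := (Real.hasDerivAt_sqrt hu.ne').comp l h2
  have hA : 0 < Real.sqrt (t + (l ^ 2 + (n : ℝ) ^ 2 / 4)) := hApos hl ht
  have heq : ∀ s : ℝ, 0 < s → 1 / (2 * s) * (2 * l) = l / s := by
    intro s hs; field_simp
  have h' := h
  rw [heq _ hA] at h'
  exact h'

lemma hasDerivAt_QF_l (hn : 1 ≤ n) (hl : l ≠ 0) (ht : ((n:ℝ)+1)*|l| < t) :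
    HasDerivAt (fun m => QF n ε δ m t) (l / AF n l t + δ) l := by
  have h1 : HasDerivAt (fun m : ℝ => ε * ((n : ℝ) / 2) + δ * m) δ l := by
    simpa using ((hasDerivAt_id l).const_mul δ).const_add (ε * ((n : ℝ) / 2))
  exact (hasDerivAt_AF_l hn hl ht).add h1

lemma hasDerivAt_term_l (hn : 1 ≤ n) (hε : ε = 1 ∨ ε = -1) (hδ : δ = 1 ∨ δ = -1)
    (hl : l ≠ 0) (ht : ((n:ℝ)+1)*|l| < t) (r s : ℝ) :
    HasDerivAt (fun m => AF n m t ^ r * QF n ε δ m t ^ s)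
      (r * l * (AF n l t ^ (r-2) * QF n ε δ l t ^ s)
        + s * ((AF n l t ^ (r-1) * (l + δ * AF n l t)) * QF n ε δ l t ^ (s-1))) l := by
  have hA : 0 < AF n l t := hApos hl ht
  have hQ : 0 < QF n ε δ l t := hQpos hn hε hδ hl ht
  have hAr : HasDerivAt (fun m => AF n m t ^ r)
      (r * AF n l t ^ (r-1) * (l / AF n l t)) l :=
    by have := (Real.hasDerivAt_rpow_const (p := r) (Or.inl hA.ne')).comp l (hasDerivAt_AF_l hn hl ht); exact this
  have hQr : HasDerivAt (fun m => QF n ε δ m t ^ s)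
      (s * QF n ε δ l t ^ (s-1) * (l / AF n l t + δ)) l :=
    by have := (Real.hasDerivAt_rpow_const (p := s) (Or.inl hQ.ne')).comp l (hasDerivAt_QF_l (ε := ε) (δ := δ) hn hl ht); exact this
  have h := hAr.mul hQr
  refine h.congr_deriv ?_
  have e1 : AF n l t ^ (r-1) = AF n l t ^ (r-2) * AF n l t := by
    have h2 := Real.rpow_add hA (r-2) 1
    rw [Real.rpow_one] at h2
    rw [show r - 2 + 1 = r - 1 by ring] at h2
    exact h2
  have e2 : AF n l t ^ r = AF n l t ^ (r-1) * AF n l t := by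
    have h2 := Real.rpow_add hA (r-1) 1
    rw [Real.rpow_one] at h2
    rw [show r - 1 + 1 = r by ring] at h2
    exact h2
  rw [e2, e1]
  field_simp

lemma deriv_lam (hn : 1 ≤ n) (hε : ε = 1 ∨ ε = -1) (hδ : δ = 1 ∨ δ = -1) (j : ℕ)
    (hl : l ≠ 0) (ht : ((n:ℝ)+1)*|l| < t) :
    deriv (fun m => iteratedDeriv j (fun s => nu0 n ε δ m s) t) l
      = ∑ β ∈ Finset.range (j+1), coef j β *
          (rE j β * l * (AF n l t ^ (rE j β - 2) * QF n ε δ l t ^ sE β)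
            + sE β * ((AF n l t ^ (rE j β - 1) * (l + δ * AF n l t))
                * QF n ε δ l t ^ (sE β - 1))) := by
  have hopen : IsOpen {m : ℝ | m ≠ 0 ∧ ((n:ℝ)+1)*|m| < t} := by
    apply IsOpen.inter isOpen_ne
    exact isOpen_lt (continuous_const.mul continuous_abs) continuous_const
  have hmem : {m : ℝ | m ≠ 0 ∧ ((n:ℝ)+1)*|m| < t} ∈ nhds l :=
    hopen.mem_nhds ⟨hl, ht⟩
  have hev : (fun m => iteratedDeriv j (fun s => nu0 n ε δ m s) t)
      =ᶠ[nhds l] (fun m => ∑ β ∈ Finset.range (j+1),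
          coef j β * (AF n m t ^ rE j β * QF n ε δ m t ^ sE β)) := by
    filter_upwards [hmem] with m hm using formula hn hε hδ j m t hm.1 hm.2
  rw [hev.deriv_eq]
  have hD : HasDerivAt (fun m => ∑ β ∈ Finset.range (j+1),
      coef j β * (AF n m t ^ rE j β * QF n ε δ m t ^ sE β))
      (∑ β ∈ Finset.range (j+1), coef j β *
        (rE j β * l * (AF n l t ^ (rE j β - 2) * QF n ε δ l t ^ sE β)
          + sE β * ((AF n l t ^ (rE j β - 1) * (l + δ * AF n l t))
              * QF n ε δ l t ^ (sE β - 1)))) l := by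
    apply HasDerivAt.fun_sum
    intro β _
    exact (hasDerivAt_term_l hn hε hδ hl ht (rE j β) (sE β)).const_mul _
  exact hD.deriv
end lamderiv

lemma keyIneq {nr l t A st : ℝ} (hcastn : 0 ≤ nr) (hlA : |l| ≤ A) (hA : 0 < A)
    (hs1 : st * st = t) (hs2 : st ≤ A) (hsnn : 0 ≤ st) (hnA : nr/2 ≤ A)
    (ht : (nr+1)*|l| < t) :
    |l| * (t + nr^2/4) ≤ (3/2) * A^2 * st := by
  have h1 : |l| * t ≤ A^2 * st := by
    have ha := mul_le_mul hlA hs2 hsnn hA.le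
    nlinarith [ha]
  have h2 : |l| * (nr^2/4) ≤ (1/2) * A^2 * st := by
    have hc : nr * ((nr+1) * |l|) ≤ nr * t := mul_le_mul_of_nonneg_left ht.le hcastn
    have hb : nr^2 * |l| ≤ nr * t := by nlinarith [hc, mul_nonneg hcastn (abs_nonneg l)]
    have hd : t ≤ st * A := by nlinarith [hs1, hs2, hsnn]
    have he : nr * t ≤ nr * (st * A) := mul_le_mul_of_nonneg_left hd hcastn
    have hf : nr * (st * A) ≤ (2*A) * (st * A) :=
      mul_le_mul_of_nonneg_right (by linarith) (by positivity)
    nlinarith [hb, he, hf]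
  nlinarith [h1, h2]

lemma numIneq {l A c : ℝ} (hlA : |l| ≤ A) (hA2 : A^2 = c + l^2) :
    (A - |l|) * A ≤ c := by
  nlinarith [sq_abs l, abs_nonneg l]

lemma kq2Ineq {l t A Q nr : ℝ} (hA : 0 < A) (hQ : 0 ≤ Q) (hnA : nr/2 ≤ A)
    (hA2 : A^2 = t + (l^2 + nr^2/4)) (hq : Q = A + (-(nr/2) + |l|)) :
    t ≤ 2 * A * Q := by
  nlinarith [sq_abs l, abs_nonneg l, mul_nonneg hQ (by linarith : (0:ℝ) ≤ A - nr/2)]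

section ctx
variable {n : ℕ} {ε δ l t : ℝ}

lemma Bctx23 (hn : 1 ≤ n) (hε : ε = 1 ∨ ε = -1) (hδ : δ = 1 ∨ δ = -1)
    (hl : l ≠ 0) (ht : ((n:ℝ)+1)*|l| < t) {j β : ℕ} (hβ : β ≤ j) :
    AF n l t ^ (rE j β - 1) * |l + δ * AF n l t| * QF n ε δ l t ^ (sE β - 1)
      ≤ ((3/2) * (3*((n:ℝ)+1)) ^ (j+1) + 2^(j+1) + 2) * (|l|⁻¹ * t ^ (-(j:ℝ))) := by
  have hA := hApos hl ht
  have hQ := hQpos hn hε hδ hl ht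
  have ht0' := ht0 hl ht
  have hK : (1:ℝ) ≤ 3*((n:ℝ)+1) := by
    have : (0:ℝ) ≤ (n:ℝ) := Nat.cast_nonneg n
    linarith
  have htu := htA hl ht
  have hKQ := hKAQ hn hε hδ hl ht
  have hlam : 0 < |l| := abs_pos.2 hl
  have hlAle : |l| ≤ AF n l t := (hlA hl ht).le
  have hA2' := hA2 hl ht
  have hnA' := hnA hn hl ht
  have habs : |δ| = 1 := by rcases hδ with h|h <;> rw [h] <;> norm_num
  have hδ2 : δ * δ = 1 := by rcases hδ with h|h <;> rw [h] <;> norm_num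
  have hXnn : (0:ℝ) ≤ |l|⁻¹ * t ^ (-(j:ℝ)) := by positivity
  have h2p : (0:ℝ) ≤ (2:ℝ)^(j+1) := by positivity
  have hKp : (0:ℝ) ≤ (3/2) * (3*((n:ℝ)+1)) ^ (j+1) := by positivity
  rcases le_or_gt (δ * l) 0 with hsign | hsign
  · -- δl ≤ 0 : cancellation case
    have hδl : δ * l = -|l| := by
      have h1 : |δ * l| = |l| := by rw [abs_mul, habs, one_mul]
      have h2 := abs_of_nonpos hsign
      linarith
    have hNeq : |l + δ * AF n l t| = AF n l t - |l| := by
      have h1 : |l + δ * AF n l t| = |δ * (l + δ * AF n l t)| := by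
        rw [abs_mul, habs, one_mul]
      have h2 : δ * (l + δ * AF n l t) = AF n l t - |l| := by
        rw [mul_add, ← mul_assoc, hδ2, one_mul, hδl]; ring
      rw [h1, h2, abs_of_nonneg (by linarith)]
    have hNum : |l + δ * AF n l t| * AF n l t ≤ t + (n:ℝ)^2/4 := by
      rw [hNeq]
      exact numIneq hlAle (by linarith [hA2'])
    have hs1 : Real.sqrt t * Real.sqrt t = t := Real.mul_self_sqrt ht0'.le
    have hs2 : Real.sqrt t ≤ AF n l t := by
      have := Real.sqrt_le_sqrt htu
      rwa [Real.sqrt_sq hA.le] at this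
    have hKey : |l| * (t + (n:ℝ)^2/4) ≤ (3/2) * AF n l t ^2 * Real.sqrt t :=
      keyIneq (Nat.cast_nonneg n) hlAle hA hs1 hs2 (Real.sqrt_nonneg t) hnA' ht
    have hmain := core23a hA hQ ht0' hK hlam htu hKQ (abs_nonneg _)
      (by positivity) hNum hKey hβ
    refine le_trans hmain (mul_le_mul_of_nonneg_right ?_ hXnn)
    linarith
  · -- δl > 0
    have hδl : δ * l = |l| := by
      have h1 : |δ * l| = |l| := by rw [abs_mul, habs, one_mul]
      have h2 := abs_of_pos hsign
      linarith
    have hN : |l + δ * AF n l t| ≤ 2 * AF n l t := by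
      calc |l + δ * AF n l t| ≤ |l| + |δ * AF n l t| := abs_add_le _ _
        _ = |l| + AF n l t := by rw [abs_mul, habs, one_mul, abs_of_pos hA]
        _ ≤ 2 * AF n l t := by linarith
    rcases hε with hε1 | hε1
    · -- ε = 1
      have hAQ : AF n l t ≤ QF n ε δ l t := by
        have hq : QF n ε δ l t = AF n l t + ((n:ℝ)/2 + |l|) := by
          unfold QF; rw [hε1, hδl]; ring
        rw [hq]
        have h0n : (0:ℝ) ≤ (n:ℝ)/2 := by positivity
        linarith [abs_nonneg l]
      have hmain := core23b hA hQ ht0' hlam hlAle htu hAQ (abs_nonneg _) hN hβ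
      refine le_trans hmain (mul_le_mul_of_nonneg_right ?_ hXnn)
      linarith
    · -- ε = -1
      have hq : QF n ε δ l t = AF n l t + (-(((n:ℝ))/2) + |l|) := by
        unfold QF; rw [hε1, hδl]; ring
      have hQlam : |l| ≤ QF n ε δ l t := by rw [hq]; linarith
      have hKQ2 : t ≤ 2 * AF n l t * QF n ε δ l t :=
        kq2Ineq hA hQ.le hnA' (by linarith [hA2']) hq
      have hmain := core23c hA hQ ht0' hlam hlAle htu hQlam hKQ2 (abs_nonneg _) hN hβ
      refine le_trans hmain (mul_le_mul_of_nonneg_right ?_ hXnn)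
      linarith
end ctx

/-- estimate (6.8) for `ν₀` in the proof of Proposition 6.7: for
every `j ≥ 0` and `i ∈ {0,1}` there is `C > 0` with
`|∂_λ^i ∂_ξ^j ν₀(λ,ξ)| ≤ C·|λ|^{−i}·ξ^{−j}` on `Ω = {λ ≠ 0, ξ > (n+1)|λ|}`. -/
theorem stmt_11 (n : ℕ) (hn : 1 ≤ n) (ε δ : ℝ)
    (hε : ε = 1 ∨ ε = -1) (hδ : δ = 1 ∨ δ = -1)
    (j : ℕ) (i : ℕ) (hi : i ≤ 1) :
    ∃ C : ℝ, 0 < C ∧ ∀ lam ξ : ℝ, lam ≠ 0 → ((n : ℝ) + 1) * |lam| < ξ →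
      |mixedPartial i j (nu0 n ε δ) lam ξ| ≤ C * |lam| ^ (-(i : ℤ)) * ξ ^ (-(j : ℤ)) := by
  have hKg : (1:ℝ) ≤ 3*((n:ℝ)+1) := by
    have : (0:ℝ) ≤ (n:ℝ) := Nat.cast_nonneg n
    linarith
  have hcoefnn : (0:ℝ) ≤ ∑ β ∈ Finset.range (j+1), |coef j β| :=
    Finset.sum_nonneg fun β _ => abs_nonneg _
  have hsqK : (0:ℝ) ≤ Real.sqrt 2 * (3*((n:ℝ)+1))^j := by positivity
  interval_cases i
  · -- i = 0
    refine ⟨(∑ β ∈ Finset.range (j+1), |coef j β|) * (Real.sqrt 2 * (3*((n:ℝ)+1))^j) + 1,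
      by positivity, ?_⟩
    intro lam ξ hlam hξ
    have hA := hApos hlam hξ
    have hQ := hQpos hn hε hδ hlam hξ
    have ht0' := ht0 hlam hξ
    have hzp : ξ ^ (-(j:ℤ)) = ξ ^ (-(j:ℝ)) := by
      rw [show -(j:ℝ) = (((-(j:ℤ)):ℤ):ℝ) by push_cast; ring, Real.rpow_intCast]
    have hmp : mixedPartial 0 j (nu0 n ε δ) lam ξ
        = iteratedDeriv j (fun s => nu0 n ε δ lam s) ξ := by
      unfold mixedPartial
      rw [iteratedDeriv_zero]
    rw [hmp, formula hn hε hδ j lam ξ hlam hξ]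
    have hbound : ∀ β ∈ Finset.range (j+1),
        |coef j β * (AF n lam ξ ^ rE j β * QF n ε δ lam ξ ^ sE β)|
          ≤ |coef j β| * (Real.sqrt 2 * (3*((n:ℝ)+1))^j * ξ ^ (-(j:ℝ))) := by
      intro β hβ
      rw [abs_mul]
      apply mul_le_mul_of_nonneg_left _ (abs_nonneg _)
      rw [abs_of_nonneg (mul_nonneg (Real.rpow_nonneg hA.le _) (Real.rpow_nonneg hQ.le _))]
      exact core0 hA hQ ht0' hKg (htA hlam hξ) (hQ2A hn hε hδ hlam hξ)
        (hKAQ hn hε hδ hlam hξ) (by exact Finset.mem_range_succ_iff.1 hβ)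
    calc |∑ β ∈ Finset.range (j+1),
          coef j β * (AF n lam ξ ^ rE j β * QF n ε δ lam ξ ^ sE β)|
        ≤ ∑ β ∈ Finset.range (j+1),
            |coef j β * (AF n lam ξ ^ rE j β * QF n ε δ lam ξ ^ sE β)| :=
          Finset.abs_sum_le_sum_abs _ _
      _ ≤ ∑ β ∈ Finset.range (j+1),
            |coef j β| * (Real.sqrt 2 * (3*((n:ℝ)+1))^j * ξ ^ (-(j:ℝ))) :=
          Finset.sum_le_sum hbound
      _ = ((∑ β ∈ Finset.range (j+1), |coef j β|) * (Real.sqrt 2 * (3*((n:ℝ)+1))^j))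
            * ξ ^ (-(j:ℝ)) := by rw [← Finset.sum_mul]; ring
      _ ≤ ((∑ β ∈ Finset.range (j+1), |coef j β|) * (Real.sqrt 2 * (3*((n:ℝ)+1))^j) + 1)
            * ξ ^ (-(j:ℝ)) := by
          apply mul_le_mul_of_nonneg_right _ (Real.rpow_nonneg ht0'.le _)
          linarith
      _ = ((∑ β ∈ Finset.range (j+1), |coef j β|) * (Real.sqrt 2 * (3*((n:ℝ)+1))^j) + 1)
            * |lam| ^ (-(0:ℤ)) * ξ ^ (-(j:ℤ)) := by
          rw [hzp]
          norm_num
  · -- i = 1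
    refine ⟨(∑ β ∈ Finset.range (j+1), |coef j β| *
        (|rE j β| * (Real.sqrt 2 * (3*((n:ℝ)+1))^j)
          + |sE β| * ((3/2) * (3*((n:ℝ)+1)) ^ (j+1) + 2^(j+1) + 2))) + 1, ?_, ?_⟩
    · have h1 : (0:ℝ) ≤ ∑ β ∈ Finset.range (j+1), |coef j β| *
          (|rE j β| * (Real.sqrt 2 * (3*((n:ℝ)+1))^j)
            + |sE β| * ((3/2) * (3*((n:ℝ)+1)) ^ (j+1) + 2^(j+1) + 2)) := by
        apply Finset.sum_nonneg
        intro β _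
        have : (0:ℝ) ≤ (3/2) * (3*((n:ℝ)+1)) ^ (j+1) + 2^(j+1) + 2 := by positivity
        positivity
      linarith
    intro lam ξ hlam hξ
    have hA := hApos hlam hξ
    have hQ := hQpos hn hε hδ hlam hξ
    have ht0' := ht0 hlam hξ
    have hlamp : 0 < |lam| := abs_pos.2 hlam
    have hzp : ξ ^ (-(j:ℤ)) = ξ ^ (-(j:ℝ)) := by
      rw [show -(j:ℝ) = (((-(j:ℤ)):ℤ):ℝ) by push_cast; ring, Real.rpow_intCast]
    have hmp : mixedPartial 1 j (nu0 n ε δ) lam ξ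
        = deriv (fun m => iteratedDeriv j (fun s => nu0 n ε δ m s) ξ) lam := by
      unfold mixedPartial
      rw [iteratedDeriv_one]
    rw [hmp, deriv_lam hn hε hδ j hlam hξ]
    have hCs : (0:ℝ) ≤ (3/2) * (3*((n:ℝ)+1)) ^ (j+1) + 2^(j+1) + 2 := by positivity
    have hbound : ∀ β ∈ Finset.range (j+1),
        |coef j β * (rE j β * lam * (AF n lam ξ ^ (rE j β - 2) * QF n ε δ lam ξ ^ sE β)
            + sE β * ((AF n lam ξ ^ (rE j β - 1) * (lam + δ * AF n lam ξ))
                * QF n ε δ lam ξ ^ (sE β - 1)))|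
          ≤ (|coef j β| * (|rE j β| * (Real.sqrt 2 * (3*((n:ℝ)+1))^j)
              + |sE β| * ((3/2) * (3*((n:ℝ)+1)) ^ (j+1) + 2^(j+1) + 2)))
            * (|lam|⁻¹ * ξ ^ (-(j:ℝ))) := by
      intro β hβ
      have hβj : β ≤ j := Finset.mem_range_succ_iff.1 hβ
      have hT1 : |rE j β * lam * (AF n lam ξ ^ (rE j β - 2) * QF n ε δ lam ξ ^ sE β)|
          = |rE j β| * (|lam| * (AF n lam ξ ^ (rE j β - 2) * QF n ε δ lam ξ ^ sE β)) := by
        rw [abs_mul, abs_mul,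
          abs_of_nonneg (mul_nonneg (Real.rpow_nonneg hA.le _) (Real.rpow_nonneg hQ.le _))]
        ring
      have hT2 : |sE β * ((AF n lam ξ ^ (rE j β - 1) * (lam + δ * AF n lam ξ))
            * QF n ε δ lam ξ ^ (sE β - 1))|
          = |sE β| * (AF n lam ξ ^ (rE j β - 1) * |lam + δ * AF n lam ξ|
              * QF n ε δ lam ξ ^ (sE β - 1)) := by
        rw [abs_mul, abs_mul, abs_mul,
          abs_of_nonneg (Real.rpow_nonneg hA.le _),
          abs_of_nonneg (Real.rpow_nonneg hQ.le _)]
      have hc1 := core1 hA hQ ht0' hKg hlamp (hlA hlam hξ).le (htA hlam hξ)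
        (hQ2A hn hε hδ hlam hξ) (hKAQ hn hε hδ hlam hξ) hβj
      have hc2 := Bctx23 hn hε hδ hlam hξ hβj
      calc |coef j β * (rE j β * lam * (AF n lam ξ ^ (rE j β - 2) * QF n ε δ lam ξ ^ sE β)
            + sE β * ((AF n lam ξ ^ (rE j β - 1) * (lam + δ * AF n lam ξ))
                * QF n ε δ lam ξ ^ (sE β - 1)))|
          ≤ |coef j β| *
              (|rE j β * lam * (AF n lam ξ ^ (rE j β - 2) * QF n ε δ lam ξ ^ sE β)|
                + |sE β * ((AF n lam ξ ^ (rE j β - 1) * (lam + δ * AF n lam ξ))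
                    * QF n ε δ lam ξ ^ (sE β - 1))|) := by
            rw [abs_mul]
            exact mul_le_mul_of_nonneg_left (abs_add_le _ _) (abs_nonneg _)
        _ ≤ |coef j β| * (|rE j β| * (Real.sqrt 2 * (3*((n:ℝ)+1))^j
                * (|lam|⁻¹ * ξ ^ (-(j:ℝ))))
              + |sE β| * (((3/2) * (3*((n:ℝ)+1)) ^ (j+1) + 2^(j+1) + 2)
                * (|lam|⁻¹ * ξ ^ (-(j:ℝ))))) := by
            apply mul_le_mul_of_nonneg_left _ (abs_nonneg _)
            rw [hT1, hT2]
            have hx1 : Real.sqrt 2 * (3 * ((n:ℝ) + 1)) ^ j * (|lam|⁻¹ * ξ ^ (-(j:ℝ)))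
                = Real.sqrt 2 * (3 * ((n:ℝ) + 1)) ^ j * (|lam|⁻¹ * ξ ^ (-(j:ℝ))) := rfl
            exact add_le_add
              (mul_le_mul_of_nonneg_left hc1 (abs_nonneg _))
              (mul_le_mul_of_nonneg_left hc2 (abs_nonneg _))
        _ = (|coef j β| * (|rE j β| * (Real.sqrt 2 * (3*((n:ℝ)+1))^j)
              + |sE β| * ((3/2) * (3*((n:ℝ)+1)) ^ (j+1) + 2^(j+1) + 2)))
            * (|lam|⁻¹ * ξ ^ (-(j:ℝ))) := by ring
    calc |∑ β ∈ Finset.range (j+1), coef j β *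
          (rE j β * lam * (AF n lam ξ ^ (rE j β - 2) * QF n ε δ lam ξ ^ sE β)
            + sE β * ((AF n lam ξ ^ (rE j β - 1) * (lam + δ * AF n lam ξ))
                * QF n ε δ lam ξ ^ (sE β - 1)))|
        ≤ ∑ β ∈ Finset.range (j+1), |coef j β *
            (rE j β * lam * (AF n lam ξ ^ (rE j β - 2) * QF n ε δ lam ξ ^ sE β)
              + sE β * ((AF n lam ξ ^ (rE j β - 1) * (lam + δ * AF n lam ξ))
                  * QF n ε δ lam ξ ^ (sE β - 1)))| := Finset.abs_sum_le_sum_abs _ _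
      _ ≤ ∑ β ∈ Finset.range (j+1),
            (|coef j β| * (|rE j β| * (Real.sqrt 2 * (3*((n:ℝ)+1))^j)
              + |sE β| * ((3/2) * (3*((n:ℝ)+1)) ^ (j+1) + 2^(j+1) + 2)))
            * (|lam|⁻¹ * ξ ^ (-(j:ℝ))) := Finset.sum_le_sum hbound
      _ = (∑ β ∈ Finset.range (j+1),
            |coef j β| * (|rE j β| * (Real.sqrt 2 * (3*((n:ℝ)+1))^j)
              + |sE β| * ((3/2) * (3*((n:ℝ)+1)) ^ (j+1) + 2^(j+1) + 2)))
            * (|lam|⁻¹ * ξ ^ (-(j:ℝ))) := by rw [← Finset.sum_mul]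
      _ ≤ ((∑ β ∈ Finset.range (j+1),
            |coef j β| * (|rE j β| * (Real.sqrt 2 * (3*((n:ℝ)+1))^j)
              + |sE β| * ((3/2) * (3*((n:ℝ)+1)) ^ (j+1) + 2^(j+1) + 2))) + 1)
            * (|lam|⁻¹ * ξ ^ (-(j:ℝ))) := by
          apply mul_le_mul_of_nonneg_right _ (by positivity)
          linarith
      _ = ((∑ β ∈ Finset.range (j+1),
            |coef j β| * (|rE j β| * (Real.sqrt 2 * (3*((n:ℝ)+1))^j)
              + |sE β| * ((3/2) * (3*((n:ℝ)+1)) ^ (j+1) + 2^(j+1) + 2))) + 1)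
            * |lam| ^ (-(1:ℤ)) * ξ ^ (-(j:ℤ)) := by
          rw [hzp, zpow_neg, zpow_one]
          ring
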